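/- Fix λ_i ∈ [0,1) for each of n qubits and let λ = max_i λ_i. Let k ≥ 0 and let O be an n-qubit operator lying in S_k, the span of the dual Wauli operators Q̃_α with |α| ≤ k. Then the operator norm of O is bounded by ‖O‖_∞ ≤ (1+λ)^k · ‖O‖_{Q1}. -/

import Mathlib

namespace SSP

noncomputable section

open Matrix
open scoped ComplexOrder

/-- Computational basis labels for `n` qubits. -/
abbrev Idx (n : ℕ) := Fin n → Fin 2

/-- Operators (matrices) on the Hilbert space of `n` qubits. -/
abbrev Op (n : ℕ) := Matrix (Idx n) (Idx n) ℂ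

/-- Super-operators on `n` qubits. -/
abbrev SOp (n : ℕ) := Op n →ₗ[ℂ] Op n

/-- The operator norm (largest singular value) of a complex matrix. -/
noncomputable def opNorm {m : Type*} [Fintype m] [DecidableEq m]
    (M : Matrix m m ℂ) : ℝ :=
  ‖Matrix.toEuclideanCLM (𝕜 := ℂ) M‖

/-- A density matrix: positive semidefinite with unit trace. -/
def IsDensity {n : ℕ} (ρ : Op n) : Prop := ρ.PosSemidef ∧ ρ.trace = 1

/-- An operator is supported on the set `S` of qubits if it has the form
`Ô_S ⊗ 1` on the remaining qubits. -/
def SupportedOn {n : ℕ} (S : Set (Fin n)) (M : Op n) : Prop :=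
  (∀ x y : Idx n, (∃ i ∉ S, x i ≠ y i) → M x y = 0) ∧
  (∀ x y x' y' : Idx n,
      (∀ i ∈ S, x i = x' i) → (∀ i ∈ S, y i = y' i) →
      (∀ i ∉ S, x i = y i) → (∀ i ∉ S, x' i = y' i) → M x y = M x' y')

/-- The support of an operator: the smallest set of qubits supporting it
(the intersection of all supporting sets). -/
def suppOp {n : ℕ} (M : Op n) : Set (Fin n) :=
  {i | ∀ S : Set (Fin n), SupportedOn S M → i ∈ S}

/-- `E` is a quantum channel (CPTP map) acting only on the qubits in `S`:
it has a Kraus representation whose Kraus operators are all supported on `S`. -/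
def IsChannelOn {n : ℕ} (S : Set (Fin n)) (E : SOp n) : Prop :=
  ∃ (m : ℕ) (F : Fin m → Op n),
    (∀ j, SupportedOn S (F j)) ∧
    (∑ j, (F j)ᴴ * F j = 1) ∧
    (∀ ρ, E ρ = ∑ j, F j * ρ * (F j)ᴴ)

/-- A quantum channel on the whole system. -/
def IsChannel {n : ℕ} (E : SOp n) : Prop := IsChannelOn Set.univ E

/-- `Estar` is the adjoint of `E` with respect to the Hilbert–Schmidt
inner product `⟨A,B⟩ = Tr(A†B)`. -/
def IsHSAdjoint {n : ℕ} (E Estar : SOp n) : Prop :=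
  ∀ A B : Op n, ((Estar A)ᴴ * B).trace = (Aᴴ * (E B)).trace

/-- An ergodic channel: it has a unique fixed point among density matrices,
this fixed point is full rank (positive definite), and there is no other
eigenvalue of modulus one. -/
def IsErgodic {n : ℕ} (E : SOp n) : Prop :=
  (∃ σ : Op n, IsDensity σ ∧ σ.PosDef ∧ E σ = σ ∧
      ∀ ρ : Op n, IsDensity ρ → E ρ = ρ → ρ = σ) ∧
  (∀ μ : ℂ, Module.End.HasEigenvalue (E : Module.End ℂ (Op n)) μ → μ = 1 ∨ ‖μ‖ < 1)

/-- The set of qubits (endpoints) of an edge. -/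
def edgeQubits {n : ℕ} (e : Sym2 (Fin n)) : Set (Fin n) := {i | i ∈ e}

/-- Finset of endpoints of an edge. -/
def edgeFinset' {n : ℕ} (e : Sym2 (Fin n)) : Finset (Fin n) :=
  Finset.univ.filter (· ∈ e)

/-- A Hamiltonian is geometrically `k`-local w.r.t. the graph `G`: it is a sum
of Hermitian terms, each supported on a connected subset of `G` with at most
`k` vertices. -/
def GeomLocal {n : ℕ} (G : SimpleGraph (Fin n)) (k : ℕ) (H : Op n) : Prop :=
  ∃ (m : ℕ) (h : Fin m → Op n) (S : Fin m → Set (Fin n)),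
    H = ∑ j, h j ∧
    ∀ j, (h j).IsHermitian ∧ SupportedOn (S j) (h j) ∧
      (S j).ncard ≤ k ∧ (G.induce (S j)).Preconnected

/-- The ball of radius `k` around a set of vertices, in the graph metric. -/
def Ball {n : ℕ} (G : SimpleGraph (Fin n)) (X : Set (Fin n)) (k : ℕ) :
    Set (Fin n) :=
  {v | ∃ u ∈ X, ∃ w : G.Walk u v, w.length ≤ k}

/- Pauli matrices and the Wauli bases. -/
def PX : Matrix (Fin 2) (Fin 2) ℂ := !![0, 1; 1, 0]
def PY : Matrix (Fin 2) (Fin 2) ℂ := !![0, -Complex.I; Complex.I, 0]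
def PZ : Matrix (Fin 2) (Fin 2) ℂ := !![1, 0; 0, -1]

/-- `W = (1/2)(1 + λ Z)`. -/
noncomputable def Wmat (l : ℝ) : Matrix (Fin 2) (Fin 2) ℂ :=
  (2⁻¹ : ℂ) • (1 + (l : ℂ) • PZ)

/-- Single-qubit Wauli basis `{W, X/2, Y/2, Z/2}`. -/
noncomputable def wauli (l : ℝ) : Fin 4 → Matrix (Fin 2) (Fin 2) ℂ :=
  ![Wmat l, (2⁻¹ : ℂ) • PX, (2⁻¹ : ℂ) • PY, (2⁻¹ : ℂ) • PZ]

/-- Single-qubit dual Wauli basis `{1, X, Y, Z - λ·1}`. -/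
noncomputable def dualWauli (l : ℝ) : Fin 4 → Matrix (Fin 2) (Fin 2) ℂ :=
  ![1, PX, PY, PZ - (l : ℂ) • 1]

/-- The `n`-qubit Wauli basis element `Q_α` (tensor product of the `Q_{α_i}`). -/
noncomputable def Qmat {n : ℕ} (lam : Fin n → ℝ) (α : Fin n → Fin 4) : Op n :=
  Matrix.of fun x y => ∏ i, wauli (lam i) (α i) (x i) (y i)

/-- The `n`-qubit dual Wauli basis element `Q̃_α`. -/
noncomputable def Qdual {n : ℕ} (lam : Fin n → ℝ) (α : Fin n → Fin 4) : Op n :=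
  Matrix.of fun x y => ∏ i, dualWauli (lam i) (α i) (x i) (y i)

/-- The support of a Wauli string. -/
def suppStr {n : ℕ} (α : Fin n → Fin 4) : Finset (Fin n) :=
  Finset.univ.filter (fun i => α i ≠ 0)

/-- The coefficient `c_α = Tr(Q_α O)` of the expansion `O = ∑_α c_α Q̃_α`
in the dual Wauli basis. -/
noncomputable def QCoeff {n : ℕ} (lam : Fin n → ℝ) (O : Op n)
    (α : Fin n → Fin 4) : ℂ :=
  (Qmat lam α * O).trace

/-- The `Q1` norm: the `ℓ¹` norm of the dual-Wauli coefficient vector. -/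
noncomputable def Q1Norm {n : ℕ} (lam : Fin n → ℝ) (O : Op n) : ℝ :=
  ∑ α : Fin n → Fin 4, ‖QCoeff lam O α‖

/-- The subspace `S_k`: the span of the dual Wauli operators `Q̃_α` with
`|α| ≤ k`. -/
def Sk {n : ℕ} (lam : Fin n → ℝ) (k : ℕ) : Submodule ℂ (Op n) :=
  Submodule.span ℂ {Q | ∃ α : Fin n → Fin 4, (suppStr α).card ≤ k ∧ Q = Qdual lam α}

/-- The trace norm `Tr √(O†O)` of a matrix. -/
noncomputable def traceNorm {m : Type*} [Fintype m] [DecidableEq m]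
    (M : Matrix m m ℂ) : ℝ :=
  (((Matrix.posSemidef_conjTranspose_mul_self M).1.eigenvectorUnitary : Matrix m m ℂ) *
      diagonal (fun i => ((Real.sqrt ∘ (Matrix.posSemidef_conjTranspose_mul_self M).1.eigenvalues) i : ℂ)) *
      (star ((Matrix.posSemidef_conjTranspose_mul_self M).1.eigenvectorUnitary : Matrix m m ℂ))).trace.re

/-!
Each `Q̃_α` is a tensor product of Hermitian single-qubit matrices whose rows have `ℓ¹`-norm `1`
off the support of `α` and at most `1 + λ` on it. Row sums of a tensor product multiply, so the Schur
test gives `‖Q̃_α‖_∞ ≤ (1 + λ)^|α|`. The Wauli and dual Wauli bases are trace-dual, hence the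
coefficients of `O = ∑ c_α Q̃_α ∈ S_k` are the `Tr(Q_α O)` entering the `Q1` norm and vanish
for `|α| > k`; the triangle inequality concludes.
-/

section TensorPi

open Finset

variable {ι κ R : Type*} [Fintype ι]

def tensorPi [CommMonoid R] (A : ι → Matrix κ κ R) : Matrix (ι → κ) (ι → κ) R :=
  of fun x y => ∏ i, A i (x i) (y i)

theorem trace_tensorPi_mul_tensorPi [Fintype κ] [CommSemiring R] [DecidableEq ι]
    (A B : ι → Matrix κ κ R) : (tensorPi A * tensorPi B).trace = ∏ i, (A i * B i).trace := by
  simp only [trace, Matrix.diag, mul_apply, tensorPi, of_apply, Fintype.prod_sum,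
    prod_mul_distrib]

theorem isHermitian_tensorPi [CommSemiring R] [StarRing R] {A : ι → Matrix κ κ R}
    (hA : ∀ i, (A i).IsHermitian) : (tensorPi A).IsHermitian :=
  IsHermitian.ext fun x y => by
    show star (∏ i, A i (y i) (x i)) = ∏ i, A i (x i) (y i)
    simp only [star_prod, (hA _).apply]

theorem sum_norm_tensorPi_apply [Fintype κ] [SeminormedCommRing R] [NormMulClass R]
    [NormOneClass R] [DecidableEq ι] (A : ι → Matrix κ κ R) (x : ι → κ) :
    ∑ y, ‖tensorPi A x y‖ = ∏ i, ∑ b, ‖A i (x i) b‖ := by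
  simp only [tensorPi, of_apply, norm_prod, Fintype.prod_sum]

end TensorPi

section L2OpNorm

open Finset
open scoped Matrix.Norms.L2Operator

variable {m : Type*} [Fintype m]

theorem l2_opNorm_le_of_sum_norm_le {𝕜 l : Type*} [RCLike 𝕜] [Fintype l] [DecidableEq l]
    (A : Matrix m l 𝕜) {r : ℝ} (hr : 0 ≤ r)
    (hrow : ∀ i, ∑ j, ‖A i j‖ ≤ r) (hcol : ∀ j, ∑ i, ‖A i j‖ ≤ r) : ‖A‖ ≤ r := by
  rw [l2_opNorm_def]
  refine ContinuousLinearMap.opNorm_le_bound _ hr fun x => ?_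
  rw [← sq_le_sq₀ (norm_nonneg _) (by positivity), mul_pow, EuclideanSpace.norm_sq_eq,
    EuclideanSpace.norm_sq_eq]
  change ∑ i, ‖(A *ᵥ x.ofLp) i‖ ^ 2 ≤ r ^ 2 * ∑ j, ‖x.ofLp j‖ ^ 2
  simp only [mulVec, dotProduct]
  calc ∑ i, ‖∑ j, A i j * x.ofLp j‖ ^ 2
      ≤ ∑ i, (∑ j, ‖A i j‖) * ∑ j, ‖A i j‖ * ‖x.ofLp j‖ ^ 2 := by
        gcongr with i
        calc ‖∑ j, A i j * x.ofLp j‖ ^ 2 ≤ (∑ j, ‖A i j‖ * ‖x.ofLp j‖) ^ 2 := by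
              gcongr
              exact (norm_sum_le _ _).trans_eq (by simp only [norm_mul])
          _ ≤ _ := sum_sq_le_sum_mul_sum_of_sq_le_mul _ (fun _ _ => norm_nonneg _)
              (fun _ _ => by positivity) (fun _ _ => le_of_eq (by ring))
    _ ≤ ∑ i, r * ∑ j, ‖A i j‖ * ‖x.ofLp j‖ ^ 2 := by gcongr with i; exact hrow i
    _ = r * ∑ j, (∑ i, ‖A i j‖) * ‖x.ofLp j‖ ^ 2 := by
        simp only [← mul_sum, sum_mul]; rw [sum_comm]
    _ ≤ r * ∑ j, r * ‖x.ofLp j‖ ^ 2 := by gcongr with j; exact hcol j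
    _ = r ^ 2 * ∑ j, ‖x.ofLp j‖ ^ 2 := by rw [← mul_sum]; ring

variable [DecidableEq m]

theorem opNorm_eq_norm (M : Matrix m m ℂ) : opNorm M = ‖M‖ := rfl

theorem opNorm_sum_smul_le {ι : Type*} (s : Finset ι) (c : ι → ℂ) (M : ι → Matrix m m ℂ) :
    opNorm (∑ i ∈ s, c i • M i) ≤ ∑ i ∈ s, ‖c i‖ * opNorm (M i) := by
  simp only [opNorm_eq_norm, ← norm_smul]
  exact norm_sum_le _ _

theorem opNorm_le_of_isHermitian_of_sum_norm_le {M : Matrix m m ℂ} (hM : M.IsHermitian)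
    {r : ℝ} (hr : 0 ≤ r) (hrow : ∀ i, ∑ j, ‖M i j‖ ≤ r) : opNorm M ≤ r :=
  l2_opNorm_le_of_sum_norm_le M hr hrow fun j => by
    simpa only [← hM.apply j, norm_star] using hrow j

end L2OpNorm

section Wauli

open Finset

variable {n : ℕ}

theorem trace_wauli_mul_dualWauli (l : ℝ) (s t : Fin 4) :
    (wauli l s * dualWauli l t).trace = if s = t then 1 else 0 := by
  fin_cases s <;> fin_cases t <;>
    simp [trace, Matrix.diag, mul_apply, wauli, dualWauli, Wmat, PX, PY, PZ, Fin.sum_univ_two,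
      mul_assoc] <;> ring

theorem dualWauli_isHermitian (l : ℝ) (t : Fin 4) : (dualWauli l t).IsHermitian := by
  refine IsHermitian.ext fun a b => ?_
  fin_cases t <;> fin_cases a <;> fin_cases b <;> simp [dualWauli, PX, PY, PZ]

theorem sum_norm_dualWauli_le (l : ℝ) (t : Fin 4) (a : Fin 2) :
    ∑ b, ‖dualWauli l t a b‖ ≤ if t = 0 then 1 else 1 + |l| := by
  fin_cases t <;> fin_cases a <;> simp [dualWauli, PX, PY, PZ, Fin.sum_univ_two] <;>
    exact (norm_sub_le _ _).trans_eq (by simp)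

theorem Qmat_eq_tensorPi (lam : Fin n → ℝ) (α : Fin n → Fin 4) :
    Qmat lam α = tensorPi fun i => wauli (lam i) (α i) := rfl

theorem Qdual_eq_tensorPi (lam : Fin n → ℝ) (α : Fin n → Fin 4) :
    Qdual lam α = tensorPi fun i => dualWauli (lam i) (α i) := rfl

theorem QCoeff_Qdual (lam : Fin n → ℝ) (α β : Fin n → Fin 4) :
    QCoeff lam (Qdual lam β) α = if α = β then 1 else 0 := by
  simp only [QCoeff, Qmat_eq_tensorPi, Qdual_eq_tensorPi, trace_tensorPi_mul_tensorPi,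
    trace_wauli_mul_dualWauli, Fintype.prod_boole, funext_iff]
  congr

theorem QCoeff_sum_smul_Qdual (lam : Fin n → ℝ) (f : (Fin n → Fin 4) → ℂ) (α : Fin n → Fin 4) :
    QCoeff lam (∑ β, f β • Qdual lam β) α = f α := by
  rw [QCoeff]
  simp only [Matrix.mul_sum, Matrix.mul_smul, trace_sum, trace_smul, smul_eq_mul, ← QCoeff.eq_1,
    QCoeff_Qdual, mul_ite, mul_one, mul_zero, sum_ite_eq, mem_univ, if_true]

theorem exists_eq_sum_smul_Qdual_of_mem_Sk {lam : Fin n → ℝ} {k : ℕ} {O : Op n}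
    (hO : O ∈ Sk lam k) : ∃ f : (Fin n → Fin 4) → ℂ,
      (∀ α, k < (suppStr α).card → f α = 0) ∧ O = ∑ α, f α • Qdual lam α := by
  induction hO using Submodule.span_induction with
  | mem Q hQ =>
    obtain ⟨β, hβ, rfl⟩ := hQ
    refine ⟨fun α => if α = β then 1 else 0, fun α hα => if_neg ?_, ?_⟩
    · rintro rfl
      exact hα.not_ge hβ
    · simp only [ite_smul, one_smul, zero_smul, sum_ite_eq', mem_univ, if_true]
  | zero => exact ⟨0, fun _ _ => rfl, by simp⟩
  | add A B _ _ hA hB =>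
    obtain ⟨f, hf, rfl⟩ := hA
    obtain ⟨g, hg, rfl⟩ := hB
    refine ⟨f + g, fun α hα => by simp [hf α hα, hg α hα], ?_⟩
    simp only [Pi.add_apply, add_smul, sum_add_distrib]
  | smul a A _ hA =>
    obtain ⟨f, hf, rfl⟩ := hA
    refine ⟨a • f, fun α hα => by simp [hf α hα], ?_⟩
    simp only [Pi.smul_apply, smul_eq_mul, mul_smul, smul_sum]

theorem opNorm_Qdual_le {lam : Fin n → ℝ} {c : ℝ} (hc : ∀ i, |lam i| ≤ c) (α : Fin n → Fin 4) :
    opNorm (Qdual lam α) ≤ (1 + c) ^ (suppStr α).card := by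
  have hprod : ∏ i, (if α i = 0 then 1 else 1 + c) = (1 + c) ^ (suppStr α).card := by
    rw [prod_ite]
    simp [suppStr]
  rw [← hprod]
  refine opNorm_le_of_isHermitian_of_sum_norm_le
    (isHermitian_tensorPi fun i => dualWauli_isHermitian _ _) (prod_nonneg fun i _ => ?_)
    fun x => ?_
  · split_ifs <;> linarith [abs_nonneg (lam i), hc i]
  calc ∑ y, ‖Qdual lam α x y‖ = ∏ i, ∑ b, ‖dualWauli (lam i) (α i) (x i) b‖ :=
        sum_norm_tensorPi_apply _ x
    _ ≤ ∏ i, if α i = 0 then 1 else 1 + c := by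
        gcongr with i
        refine (sum_norm_dualWauli_le _ _ _).trans ?_
        split_ifs <;> linarith [hc i]

end Wauli

theorem opNorm_le_pow_mul_Q1Norm_general {n : ℕ} (lam : Fin n → ℝ)
    (hlam : ∀ i, 0 ≤ lam i ∧ lam i < 1)
    (lmax : ℝ) (hmax : IsGreatest (Set.range lam) lmax)
    (k : ℕ) (O : Op n) (hO : O ∈ Sk lam k) :
    opNorm O ≤ (1 + lmax) ^ k * Q1Norm lam O := by
  obtain ⟨f, hf, rfl⟩ := exists_eq_sum_smul_Qdual_of_mem_Sk hO
  obtain ⟨⟨i₀, rfl⟩, hle⟩ := hmax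
  have habs (i : Fin n) : |lam i| ≤ lam i₀ := (abs_of_nonneg (hlam i).1).trans_le (hle ⟨i, rfl⟩)
  have hterm (α : Fin n → Fin 4) : ‖f α‖ * opNorm (Qdual lam α) ≤ (1 + lam i₀) ^ k * ‖f α‖ := by
    rcases le_or_gt (suppStr α).card k with hα | hα
    · rw [mul_comm]
      gcongr
      exact (opNorm_Qdual_le habs α).trans (pow_le_pow_right₀ (by linarith [(hlam i₀).1]) hα)
    · simp [hf α hα]
  calc opNorm (∑ α, f α • Qdual lam α) ≤ ∑ α, ‖f α‖ * opNorm (Qdual lam α) :=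
        opNorm_sum_smul_le _ _ _
    _ ≤ ∑ α, (1 + lam i₀) ^ k * ‖f α‖ := Finset.sum_le_sum fun α _ => hterm α
    _ = (1 + lam i₀) ^ k * Q1Norm lam (∑ α, f α • Qdual lam α) := by
        simp only [Q1Norm, QCoeff_sum_smul_Qdual, Finset.mul_sum]

/-- for operators in `S_k`, the operator norm is controlled by
the `Q1` norm, `‖O‖_∞ ≤ (1+λ)^k ‖O‖_{Q1}` where `λ = max_i λ_i`. -/
theorem opNorm_le_pow_mul_Q1Norm {n : ℕ} (hn : 0 < n) (lam : Fin n → ℝ)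
    (hlam : ∀ i, 0 ≤ lam i ∧ lam i < 1)
    (lmax : ℝ) (hmax : IsGreatest (Set.range lam) lmax)
    (k : ℕ) (O : Op n) (hO : O ∈ Sk lam k) :
    opNorm O ≤ (1 + lmax) ^ k * Q1Norm lam O :=
  opNorm_le_pow_mul_Q1Norm_general lam hlam lmax hmax k O hO

end

end SSP
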